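/- arXiv:math/0011039 — 8 statements merged into one kernel-verified Lean document; each statement's English description precedes it below -/
import Mathlib

section
/- For n ≥ 2 and 0 < μ ≤ (1/n)((n-1)/n)^(n-1), the two positive roots a_-(μ) ≤ a_+(μ) of t^n - t^(n-1) + μ = 0 satisfy μ^(1/(n-1)) ≤ a_-(μ) ≤ (n-1)/n ≤ a_+(μ) ≤ 1. -/
/-!
Write `P(t) = t^(n-1) (t - 1) + μ`. At the critical point `c = (n-1)/n` one has
`P(c) = μ - c^(n-1)/n ≤ 0`, while `P(0) = P(1) = μ > 0`, so by the intermediate value theorem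
`P` has a root in `(0, c]` and one in `[c, 1]`, which bound `a_-` from above and `a_+` from below.
A root `a ≥ 0` satisfies `μ = a^(n-1) - a^n`, which forces `a < 1` and `μ ≤ a^(n-1)`.
-/

open Set

def delaunayPoly (n : ℕ) (μ t : ℝ) : ℝ := t ^ n - t ^ (n - 1) + μ

namespace delaunayPoly

variable {n : ℕ} {μ t : ℝ}

theorem continuous (n : ℕ) (μ : ℝ) : Continuous (delaunayPoly n μ) := by
  unfold delaunayPoly
  fun_prop

theorem apply_zero (hn : 2 ≤ n) : delaunayPoly n μ 0 = μ := by
  simp [delaunayPoly, zero_pow (by omega : n ≠ 0), zero_pow (by omega : n - 1 ≠ 0)]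

theorem apply_one : delaunayPoly n μ 1 = μ := by
  simp [delaunayPoly]

theorem apply_sub_one_div (hn : n ≠ 0) :
    delaunayPoly n μ (((n : ℝ) - 1) / n) = μ - 1 / n * (((n : ℝ) - 1) / n) ^ (n - 1) := by
  have hn' : (n : ℝ) ≠ 0 := Nat.cast_ne_zero.2 hn
  have hsucc : n - 1 + 1 = n := Nat.sub_add_cancel (Nat.one_le_iff_ne_zero.2 hn)
  unfold delaunayPoly
  rw [← hsucc, pow_succ, Nat.add_sub_cancel]
  field_simp
  ring

theorem lt_one_of_eq_zero (hμ : 0 < μ) (h : delaunayPoly n μ t = 0) : t < 1 := by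
  by_contra! ht
  have : t ^ (n - 1) ≤ t ^ n := pow_le_pow_right₀ ht (Nat.sub_le n 1)
  unfold delaunayPoly at h
  linarith

theorem le_pow_of_eq_zero (ht : 0 ≤ t) (h : delaunayPoly n μ t = 0) : μ ≤ t ^ (n - 1) := by
  unfold delaunayPoly at h
  linarith [pow_nonneg ht n]

theorem exists_eq_zero_mem_Ioc (hn : 2 ≤ n) (hμ : 0 < μ) {c : ℝ} (hc : 0 ≤ c)
    (hPc : delaunayPoly n μ c ≤ 0) : ∃ r ∈ Ioc 0 c, delaunayPoly n μ r = 0 := by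
  obtain ⟨r, ⟨hr0, hrc⟩, hr⟩ := intermediate_value_Icc' hc (continuous n μ).continuousOn
    ⟨hPc, (apply_zero hn).symm ▸ hμ.le⟩
  refine ⟨r, ⟨hr0.lt_of_ne ?_, hrc⟩, hr⟩
  rintro rfl
  rw [apply_zero hn] at hr
  exact hμ.ne' hr

theorem exists_eq_zero_mem_Icc (hμ : 0 ≤ μ) {c : ℝ} (hc : c ≤ 1)
    (hPc : delaunayPoly n μ c ≤ 0) : ∃ r ∈ Icc c 1, delaunayPoly n μ r = 0 :=
  intermediate_value_Icc hc (continuous n μ).continuousOn ⟨hPc, apply_one.symm ▸ hμ⟩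

end delaunayPoly

theorem delaunay_polynomial_root_bounds_general (n : ℕ) (hn : 2 ≤ n) (μ : ℝ)
    (hμ : 0 < μ) (hμ' : μ ≤ (1 / n) * (((n : ℝ) - 1) / n) ^ (n - 1))
    (am ap : ℝ) (ham : 0 < am)
    (hrootm : am ^ n - am ^ (n - 1) + μ = 0)
    (hrootp : ap ^ n - ap ^ (n - 1) + μ = 0)
    (hall : ∀ t : ℝ, 0 < t → t ^ n - t ^ (n - 1) + μ = 0 → am ≤ t ∧ t ≤ ap) :
    μ ^ (1 / ((n : ℝ) - 1)) ≤ am ∧ am ≤ ((n : ℝ) - 1) / n ∧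
      ((n : ℝ) - 1) / n ≤ ap ∧ ap ≤ 1 := by
  have hnR : (2 : ℝ) ≤ n := by exact_mod_cast hn
  set c : ℝ := ((n : ℝ) - 1) / n
  have hc0 : 0 < c := div_pos (by linarith) (by linarith)
  have hc1 : c ≤ 1 := div_le_one_of_le₀ (by linarith) (by linarith)
  have hPc : delaunayPoly n μ c ≤ 0 := by
    rw [delaunayPoly.apply_sub_one_div (by omega)]
    linarith
  obtain ⟨r, ⟨hr0, hrc⟩, hr⟩ := delaunayPoly.exists_eq_zero_mem_Ioc hn hμ hc0.le hPc
  obtain ⟨s, ⟨hcs, -⟩, hs⟩ := delaunayPoly.exists_eq_zero_mem_Icc hμ.le hc1 hPc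
  refine ⟨?_, (hall r hr0 hr).1.trans hrc, hcs.trans (hall s (hc0.trans_le hcs) hs).2,
    (delaunayPoly.lt_one_of_eq_zero hμ hrootp).le⟩
  have hpow : μ ≤ am ^ ((n - 1 : ℕ) : ℝ) := by
    rw [Real.rpow_natCast]
    exact delaunayPoly.le_pow_of_eq_zero ham.le hrootm
  rw [Nat.cast_sub (by omega), Nat.cast_one] at hpow
  rwa [one_div, Real.rpow_inv_le_iff_of_pos hμ.le ham.le (by linarith)]

/-- For `n ≥ 2` and `0 < μ ≤ (1/n)((n-1)/n)^(n-1)`, the two positive roots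
`am ≤ ap` of `t^n - t^(n-1) + μ = 0` satisfy `μ^(1/(n-1)) ≤ am ≤ (n-1)/n ≤ ap ≤ 1`. -/
theorem delaunay_polynomial_root_bounds (n : ℕ) (hn : 2 ≤ n) (μ : ℝ)
    (hμ : 0 < μ) (hμ' : μ ≤ (1 / n) * (((n : ℝ) - 1) / n) ^ (n - 1))
    (am ap : ℝ) (ham : 0 < am) (hle : am ≤ ap)
    (hrootm : am ^ n - am ^ (n - 1) + μ = 0)
    (hrootp : ap ^ n - ap ^ (n - 1) + μ = 0)
    (hall : ∀ t : ℝ, 0 < t → t ^ n - t ^ (n - 1) + μ = 0 → am ≤ t ∧ t ≤ ap) :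
    μ ^ (1 / ((n : ℝ) - 1)) ≤ am ∧ am ≤ ((n : ℝ) - 1) / n ∧
      ((n : ℝ) - 1) / n ≤ ap ∧ ap ≤ 1 :=
  delaunay_polynomial_root_bounds_general n hn μ hμ hμ' am ap ham hrootm hrootp hall
end

section
/- For n ≥ 2 and 0 < μ ≤ (1/n)((n-1)/n)^(n-1), for every t in the interval [a_-(μ), a_+(μ)] one has n t² (1 + (n-1) μ² t^(-2n)) ≤ n², where a_±(μ) are the two positive roots of t^n - t^(n-1) + μ = 0. -/
open Set

/-! Both roots satisfy `s ^ (n-1) * (1 - s) = μ`, and `s ↦ s ^ (n-1) * (1 - s)` increases up to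
`(n-1)/n` and decreases afterwards, so it is at least `μ` between the roots. Hence `t ≤ 1` and
`μ / t ^ n ≤ (1 - t) / t`, which turns the bound into `t ^ 2 + (n-1) (1 - t) ^ 2 ≤ n`. -/

theorem min_le_of_monotoneOn_of_antitoneOn {f : ℝ → ℝ} {x y c t : ℝ}
    (hmono : MonotoneOn f (Icc x c)) (hanti : AntitoneOn f (Icc c y))
    (hxt : x ≤ t) (hty : t ≤ y) : min (f x) (f y) ≤ f t := by
  rcases le_total t c with htc | hct
  · exact (min_le_left _ _).trans (hmono ⟨le_rfl, hxt.trans htc⟩ ⟨hxt, htc⟩ hxt)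
  · exact (min_le_right _ _).trans (hanti ⟨hct, hty⟩ ⟨hct.trans hty, le_rfl⟩ hty)

theorem hasDerivAt_pow_mul_one_sub (m : ℕ) (s : ℝ) :
    HasDerivAt (fun s : ℝ => s ^ m * (1 - s)) (m * s ^ (m - 1) * (1 - s) - s ^ m) s :=
  ((hasDerivAt_pow m s).fun_mul ((hasDerivAt_id' s).const_sub 1)).congr_deriv (by ring)

theorem mul_deriv_pow_mul_one_sub (m : ℕ) (s : ℝ) :
    s * deriv (fun s : ℝ => s ^ m * (1 - s)) s = s ^ m * (m - (m + 1) * s) := by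
  rw [(hasDerivAt_pow_mul_one_sub m s).deriv]
  rcases m with _ | m
  · simp
  · simp only [Nat.add_sub_cancel, pow_succ]
    push_cast
    ring

theorem monotoneOn_pow_mul_one_sub (m : ℕ) :
    MonotoneOn (fun s : ℝ => s ^ m * (1 - s)) (Icc 0 (m / (m + 1))) := by
  refine monotoneOn_of_deriv_nonneg (convex_Icc _ _) (by fun_prop) (by fun_prop) ?_
  rw [interior_Icc]
  rintro s ⟨hs, hsc⟩
  rw [lt_div_iff₀ (by positivity)] at hsc
  refine nonneg_of_mul_nonneg_right ?_ hs
  rw [mul_deriv_pow_mul_one_sub]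
  exact mul_nonneg (by positivity) (by linarith)

theorem antitoneOn_pow_mul_one_sub (m : ℕ) :
    AntitoneOn (fun s : ℝ => s ^ m * (1 - s)) (Ici (m / (m + 1))) := by
  refine antitoneOn_of_deriv_nonpos (convex_Ici _) (by fun_prop) (by fun_prop) ?_
  rw [interior_Ici]
  intro s (hcs : _ < s)
  have hs : 0 < s := lt_of_le_of_lt (by positivity) hcs
  rw [div_lt_iff₀ (by positivity)] at hcs
  refine nonpos_of_mul_nonpos_right ?_ hs
  rw [mul_deriv_pow_mul_one_sub]
  exact mul_nonpos_of_nonneg_of_nonpos (by positivity) (by linarith)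

theorem potential_bound_of_le_pow_mul_one_sub {n : ℕ} {μ t : ℝ} (hn : 1 ≤ n) (ht : 0 < t)
    (hμ : 0 ≤ μ) (hμt : μ ≤ t ^ (n - 1) * (1 - t)) :
    (n : ℝ) * t ^ 2 * (1 + ((n : ℝ) - 1) * μ ^ 2 / t ^ (2 * n)) ≤ (n : ℝ) ^ 2 := by
  obtain ⟨m, rfl⟩ : ∃ m, n = m + 1 := ⟨n - 1, by omega⟩
  simp only [Nat.add_sub_cancel] at hμt
  push_cast
  have ht1 : 0 ≤ 1 - t := nonneg_of_mul_nonneg_right (hμ.trans hμt) (pow_pos ht m)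
  have hsq : μ ^ 2 ≤ (t ^ m) ^ 2 * (1 - t) ^ 2 := by
    rw [← mul_pow]
    exact pow_le_pow_left₀ hμ hμt 2
  have hquot : t ^ 2 * (μ ^ 2 / t ^ (2 * (m + 1))) ≤ (1 - t) ^ 2 :=
    calc t ^ 2 * (μ ^ 2 / t ^ (2 * (m + 1))) = μ ^ 2 / (t ^ m) ^ 2 := by field_simp; ring
      _ ≤ (1 - t) ^ 2 := by rw [div_le_iff₀ (by positivity)]; linarith
  calc ((m : ℝ) + 1) * t ^ 2 * (1 + ((m : ℝ) + 1 - 1) * μ ^ 2 / t ^ (2 * (m + 1)))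
      = (m + 1) * (t ^ 2 + m * (t ^ 2 * (μ ^ 2 / t ^ (2 * (m + 1))))) := by ring
    _ ≤ (m + 1) * (t ^ 2 + m * (1 - t) ^ 2) := by gcongr
    _ ≤ (m + 1) * (1 + m * 1) := by
        gcongr
        · exact pow_le_one₀ ht.le (by linarith)
        · exact pow_le_one₀ ht1 (by linarith)
    _ = ((m : ℝ) + 1) ^ 2 := by ring

theorem delaunay_potential_bound_general (n : ℕ) (hn : 2 ≤ n) (μ : ℝ)
    (hμ : 0 < μ)
    (am ap : ℝ) (ham : 0 < am)
    (hrootm : am ^ n - am ^ (n - 1) + μ = 0)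
    (hrootp : ap ^ n - ap ^ (n - 1) + μ = 0) :
    ∀ t ∈ Icc am ap, (n : ℝ) * t ^ 2 * (1 + ((n : ℝ) - 1) * μ ^ 2 / t ^ (2 * n))
      ≤ (n : ℝ) ^ 2 := by
  rintro t ⟨htm, htp⟩
  have hprofile : ∀ a : ℝ, a ^ n - a ^ (n - 1) + μ = 0 → a ^ (n - 1) * (1 - a) = μ := by
    intro a ha
    rw [← pow_sub_one_mul (by omega : n ≠ 0)] at ha
    linarith
  have hμt : μ ≤ t ^ (n - 1) * (1 - t) := by
    have := min_le_of_monotoneOn_of_antitoneOn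
      ((monotoneOn_pow_mul_one_sub (n - 1)).mono (Icc_subset_Icc_left ham.le))
      ((antitoneOn_pow_mul_one_sub (n - 1)).mono Icc_subset_Ici_self) htm htp
    simpa only [hprofile am hrootm, hprofile ap hrootp, min_self] using this
  exact potential_bound_of_le_pow_mul_one_sub (by omega) (ham.trans_le htm) hμ.le hμt

/-- For `n ≥ 2` and `0 < μ ≤ (1/n)((n-1)/n)^(n-1)`, for every `t` in
`[am(μ), ap(μ)]` one has `n t² (1 + (n-1) μ² t^(-2n)) ≤ n²`, where `am(μ) ≤ ap(μ)`
are the two positive roots of `t^n - t^(n-1) + μ = 0`. -/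
theorem delaunay_potential_bound (n : ℕ) (hn : 2 ≤ n) (μ : ℝ)
    (hμ : 0 < μ) (hμ' : μ ≤ (1 / n) * (((n : ℝ) - 1) / n) ^ (n - 1))
    (am ap : ℝ) (ham : 0 < am) (hle : am ≤ ap)
    (hrootm : am ^ n - am ^ (n - 1) + μ = 0)
    (hrootp : ap ^ n - ap ^ (n - 1) + μ = 0)
    (hall : ∀ t : ℝ, 0 < t → t ^ n - t ^ (n - 1) + μ = 0 → am ≤ t ∧ t ≤ ap) :
    ∀ t ∈ Icc am ap, (n : ℝ) * t ^ 2 * (1 + ((n : ℝ) - 1) * μ ^ 2 / t ^ (2 * n))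
      ≤ (n : ℝ) ^ 2 :=
  delaunay_potential_bound_general n hn μ hμ am ap ham hrootm hrootp
end

section
/- For n ≥ 2 and 0 < μ ≤ (1/n)((n-1)/n)^(n-1), one has Q(μ^(1/(n-1))) ≤ n² and Q(1) ≤ n², where Q(t) = n t²(1 + (n-1)μ² t^(-2n)). -/
/-!
At `t = μ ^ (1/(n-1))` the two terms of `Q` decouple, since `t ^ (n-1) = μ` turns
`(n-1) μ² / t^(2n)` into `(n-1) / t²`; hence `Q(t) = n t² + n (n-1)`, which is at most `n²`
because `t ≤ 1`. At `t = 1`, `Q(1) = n (1 + (n-1) μ²) ≤ n²` because `μ ≤ 1`. Both reduce to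
`μ ≤ 1`, which the hypothesis gives since `1/n` and `((n-1)/n)^(n-1)` are at most `1`.
-/

noncomputable def delaunayQ (n : ℕ) (μ t : ℝ) : ℝ :=
  n * t ^ 2 * (1 + ((n : ℝ) - 1) * μ ^ 2 / t ^ (2 * n))

theorem one_div_mul_sub_one_div_pow_le_one (n : ℕ) :
    (1 / n : ℝ) * (((n : ℝ) - 1) / n) ^ (n - 1) ≤ 1 := by
  rcases Nat.eq_zero_or_pos n with rfl | hn
  · simp
  have hn' : (1 : ℝ) ≤ n := by exact_mod_cast hn
  have hpos : (0 : ℝ) < n := by linarith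
  refine mul_le_one₀ ?_ (by positivity) (pow_le_one₀ ?_ ?_)
  · rw [div_le_one hpos]; exact hn'
  · exact div_nonneg (by linarith) hpos.le
  · rw [div_le_one hpos]; linarith

theorem delaunayQ_eq_of_pow_eq {n : ℕ} (hn : 1 ≤ n) {μ t : ℝ} (ht : t ≠ 0)
    (htμ : t ^ (n - 1) = μ) : delaunayQ n μ t = n * t ^ 2 + n * ((n : ℝ) - 1) := by
  have hsplit : t ^ (2 * n) = (t ^ (n - 1)) ^ 2 * t ^ 2 := by
    rw [← pow_mul, ← pow_add]; congr 1; omega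
  rw [delaunayQ, hsplit, htμ]
  have hμ : μ ≠ 0 := htμ ▸ pow_ne_zero _ ht
  field_simp

theorem delaunayQ_le_sq_of_pow_eq {n : ℕ} (hn : 1 ≤ n) {μ t : ℝ} (ht₀ : 0 < t) (ht₁ : t ≤ 1)
    (htμ : t ^ (n - 1) = μ) : delaunayQ n μ t ≤ (n : ℝ) ^ 2 := by
  rw [delaunayQ_eq_of_pow_eq hn ht₀.ne' htμ]
  have ht2 : t ^ 2 ≤ 1 := pow_le_one₀ ht₀.le ht₁
  have hn0 : (0 : ℝ) ≤ n := n.cast_nonneg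
  nlinarith

theorem delaunayQ_one_le_sq {n : ℕ} (hn : 1 ≤ n) {μ : ℝ} (hμ : μ ^ 2 ≤ 1) :
    delaunayQ n μ 1 ≤ (n : ℝ) ^ 2 := by
  have hn' : (1 : ℝ) ≤ n := by exact_mod_cast hn
  have hnn : (0 : ℝ) ≤ n * ((n : ℝ) - 1) := mul_nonneg (by linarith) (by linarith)
  simp only [delaunayQ, one_pow, mul_one, div_one]
  nlinarith

/-- For `n ≥ 2` and `0 < μ ≤ (1/n)((n-1)/n)^(n-1)`, one has
`Q(μ^(1/(n-1))) ≤ n²` and `Q(1) ≤ n²`, where `Q(t) = n t² (1 + (n-1) μ² t^(-2n))`. -/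
theorem delaunay_potential_Q_endpoint_bounds (n : ℕ) (hn : 2 ≤ n) (μ : ℝ)
    (hμ : 0 < μ) (hμ' : μ ≤ (1 / n) * (((n : ℝ) - 1) / n) ^ (n - 1)) :
    (n : ℝ) * (μ ^ (1 / ((n : ℝ) - 1))) ^ 2 *
        (1 + ((n : ℝ) - 1) * μ ^ 2 / (μ ^ (1 / ((n : ℝ) - 1))) ^ (2 * n)) ≤ (n : ℝ) ^ 2 ∧
    (n : ℝ) * (1 : ℝ) ^ 2 * (1 + ((n : ℝ) - 1) * μ ^ 2 / (1 : ℝ) ^ (2 * n)) ≤ (n : ℝ) ^ 2 := by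
  have hμ₁ : μ ≤ 1 := hμ'.trans (one_div_mul_sub_one_div_pow_le_one n)
  have hexp : 1 / ((n : ℝ) - 1) = ((n - 1 : ℕ) : ℝ)⁻¹ := by
    rw [Nat.cast_sub (by omega), Nat.cast_one, one_div]
  have hroot : (μ ^ (1 / ((n : ℝ) - 1))) ^ (n - 1) = μ := by
    rw [hexp]; exact Real.rpow_inv_natCast_pow hμ.le (by omega)
  exact ⟨delaunayQ_le_sq_of_pow_eq (by omega) (Real.rpow_pos_of_pos hμ _)
      (Real.rpow_le_one hμ.le hμ₁ (by rw [hexp]; positivity)) hroot,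
    delaunayQ_one_le_sq (by omega) (pow_le_one₀ hμ.le hμ₁)⟩
end

section
/- Suppose f : ℝ → ℝ is smooth, positive, and satisfies f^(n-1)(x) / sqrt(1 + f'(x)²) - f^n(x) = μ for all x, with 0 < μ < (1/n)((n-1)/n)^(n-1). Then a_-(μ) ≤ f(x) ≤ a_+(μ) for all x, where a_±(μ) are the two positive roots of t^n - t^(n-1) + μ = 0. -/
/-- If `f : ℝ → ℝ` is smooth, positive, and satisfies the Delaunay ODE
`f^(n-1)/√(1+f'²) - f^n = μ` with `0 < μ < (1/n)((n-1)/n)^(n-1)`, then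
`a₋(μ) ≤ f(x) ≤ a₊(μ)` for all `x`, where `a₋(μ) ≤ a₊(μ)` are the two positive roots of
`t^n - t^(n-1) + μ = 0`. -/
theorem delaunay_profile_pinched (n : ℕ) (hn : 2 ≤ n) (μ : ℝ)
    (hμ : 0 < μ) (hμ' : μ < (1 / n) * (((n : ℝ) - 1) / n) ^ (n - 1))
    (f : ℝ → ℝ) (hf : ContDiff ℝ (⊤ : ℕ∞) f) (hfpos : ∀ x, 0 < f x)
    (hode : ∀ x, f x ^ (n - 1) / Real.sqrt (1 + (deriv f x) ^ 2) - f x ^ n = μ)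
    (am ap : ℝ) (ham : 0 < am) (hle : am ≤ ap)
    (hrootm : am ^ n - am ^ (n - 1) + μ = 0)
    (hrootp : ap ^ n - ap ^ (n - 1) + μ = 0)
    (hall : ∀ t : ℝ, 0 < t → t ^ n - t ^ (n - 1) + μ = 0 → t = am ∨ t = ap) :
    ∀ x, am ≤ f x ∧ f x ≤ ap := by
  intro x
  set G : ℝ → ℝ := fun s => s ^ n - s ^ (n - 1) + μ with hG
  have hGcont : Continuous G := by
    exact ((continuous_pow n).sub (continuous_pow (n - 1))).add continuous_const
  set t := f x with htdef
  have ht : 0 < t := hfpos x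
  -- sqrt(1 + f'²) ≥ 1
  have hs1 : (1 : ℝ) ≤ Real.sqrt (1 + (deriv f x) ^ 2) := by
    have h := Real.sqrt_le_sqrt (show (1:ℝ) ≤ 1 + (deriv f x) ^ 2 by nlinarith [sq_nonneg (deriv f x)])
    rwa [Real.sqrt_one] at h
  have hGt : G t ≤ 0 := by
    have h1 : t ^ (n - 1) / Real.sqrt (1 + (deriv f x) ^ 2) ≤ t ^ (n - 1) :=
      div_le_self (pow_nonneg ht.le _) hs1
    have h2 := hode x
    simp only [hG]
    nlinarith
  have hpow : ∀ s : ℝ, s ^ n = s ^ (n - 1) * s := by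
    intro s
    rw [← pow_succ]
    congr 1
    omega
  -- G t ≤ 0 forces t < 1
  have ht1 : t < 1 := by
    by_contra h
    push_neg at h
    have h1 : (1:ℝ) ≤ t ^ (n - 1) := one_le_pow₀ h
    have := hGt
    simp only [hG] at this
    rw [hpow t] at this
    nlinarith
  have hG0 : G 0 = μ := by
    simp only [hG]
    rw [zero_pow (by omega : n ≠ 0), zero_pow (by omega : n - 1 ≠ 0)]
    ring
  have hG1 : G 1 = μ := by simp only [hG]; ring_nf
  constructor
  · by_contra h
    push_neg at h
    -- IVT on [0, t]: G 0 = μ > 0, G t ≤ 0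
    have hiv : (0 : ℝ) ∈ Set.Icc (G t) (G 0) := ⟨hGt, by rw [hG0]; exact hμ.le⟩
    obtain ⟨s, hs, hGs⟩ := intermediate_value_Icc' ht.le hGcont.continuousOn hiv
    have hs0 : 0 < s := by
      rcases lt_or_eq_of_le hs.1 with h' | h'
      · exact h'
      · exfalso; rw [← h'] at hGs; rw [hG0] at hGs; linarith
    rcases hall s hs0 hGs with rfl | rfl
    · linarith [hs.2]
    · linarith [hs.2]
  · by_contra h
    push_neg at h
    -- IVT on [t, 1]: G t ≤ 0, G 1 = μ > 0
    have hiv : (0 : ℝ) ∈ Set.Icc (G t) (G 1) := ⟨hGt, by rw [hG1]; exact hμ.le⟩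
    obtain ⟨s, hs, hGs⟩ := intermediate_value_Icc ht1.le hGcont.continuousOn hiv
    have hs0 : 0 < s := lt_of_lt_of_le ht hs.1
    rcases hall s hs0 hGs with rfl | rfl
    · linarith [hs.1]
    · linarith [hs.1]
end

section
/- Let φ : ℝ → (0, π/2) be smooth and satisfy (tan φ)^(n-1) / (cos φ · sqrt(1 + φ'²)) - H (tan φ)^n = μ with H > 1 and μ > 0. Then the function g(t) = e^t (cos φ(t) - φ'(t) sin φ(t)) never vanishes; equivalently, e^t cos φ(t) has nonvanishing derivative. -/
open Real

/-- Let `φ : ℝ → (0, π/2)` be smooth and satisfy the hyperbolic Delaunay ODE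
`(tan φ)^(n-1) / (cos φ · √(1 + φ'²)) - H (tan φ)^n = μ` with `H > 1` and `μ > 0`. Then
`g'(t) = e^t (cos φ(t) - φ'(t) sin φ(t))` never vanishes; equivalently `e^t cos φ(t)` has
nonvanishing derivative. -/
theorem hyperbolic_delaunay_height_monotone (n : ℕ) (hn : 2 ≤ n) (H μ : ℝ)
    (hH : 1 < H) (hμ : 0 < μ)
    (φ : ℝ → ℝ) (hφ : ContDiff ℝ (⊤ : ℕ∞) φ)
    (hrange : ∀ t, 0 < φ t ∧ φ t < π / 2)
    (hode : ∀ t, (Real.tan (φ t)) ^ (n - 1) /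
        (Real.cos (φ t) * Real.sqrt (1 + (deriv φ t) ^ 2))
      - H * (Real.tan (φ t)) ^ n = μ) :
    ∀ t, Real.exp t * (Real.cos (φ t) - deriv φ t * Real.sin (φ t)) ≠ 0 ∧
      deriv (fun s => Real.exp s * Real.cos (φ s)) t ≠ 0 := by
  have key : ∀ t, Real.cos (φ t) - deriv φ t * Real.sin (φ t) ≠ 0 := by
    intro t h
    obtain ⟨m, rfl⟩ : ∃ m, n = m + 1 := ⟨n - 1, by omega⟩
    obtain ⟨h1, h2⟩ := hrange t
    have hpi := Real.pi_pos
    have hc : 0 < Real.cos (φ t) := Real.cos_pos_of_mem_Ioo ⟨by linarith, h2⟩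
    have hs : 0 < Real.sin (φ t) := Real.sin_pos_of_pos_of_lt_pi h1 (by linarith)
    have hφ' : deriv φ t = Real.cos (φ t) / Real.sin (φ t) := by
      field_simp
      linarith
    have hsum : 1 + (deriv φ t) ^ 2 = (1 / Real.sin (φ t)) ^ 2 := by
      rw [hφ', div_pow, div_pow, one_pow, eq_div_iff (by positivity)]
      field_simp
      exact Real.sin_sq_add_cos_sq _
    have hsqrt : Real.sqrt (1 + (deriv φ t) ^ 2) = 1 / Real.sin (φ t) := by
      rw [hsum, Real.sqrt_sq (by positivity)]
    have htan : Real.tan (φ t) = Real.sin (φ t) / Real.cos (φ t) :=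
      Real.tan_eq_sin_div_cos _
    have htanpos : 0 < Real.tan (φ t) := by rw [htan]; positivity
    have hode' := hode t
    rw [hsqrt] at hode'
    have hterm : Real.tan (φ t) ^ (m + 1 - 1) / (Real.cos (φ t) * (1 / Real.sin (φ t)))
        = Real.tan (φ t) ^ (m + 1) := by
      simp only [Nat.add_sub_cancel]
      rw [htan, pow_succ]
      field_simp
    rw [hterm] at hode'
    have : μ = (1 - H) * Real.tan (φ t) ^ (m + 1) := by linarith
    have hneg : (1 - H) * Real.tan (φ t) ^ (m + 1) < 0 :=
      mul_neg_of_neg_of_pos (by linarith) (by positivity)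
    linarith
  intro t
  have hdφ : HasDerivAt φ (deriv φ t) t :=
    ((hφ.differentiable (by simp)) t).hasDerivAt
  have hd := (Real.hasDerivAt_exp t).mul ((Real.hasDerivAt_cos (φ t)).comp t hdφ)
  have hderiv : deriv (fun s => Real.exp s * Real.cos (φ s)) t
      = Real.exp t * (Real.cos (φ t) - deriv φ t * Real.sin (φ t)) := by
    have hh : deriv (fun s => Real.exp s * Real.cos (φ s)) t = _ := hd.deriv
    simp only [Function.comp] at hh
    rw [hh]
    ring
  have hne : Real.exp t * (Real.cos (φ t) - deriv φ t * Real.sin (φ t)) ≠ 0 :=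
    mul_ne_zero (Real.exp_ne_zero t) (key t)
  exact ⟨hne, hderiv ▸ hne⟩
end

section
/- There exists a constant c(n,H) depending only on n and H > 1 such that for all μ > 0 and all φ ∈ (0, π/2) satisfying the hyperbolic Delaunay constraint (i.e., lying in the range of the profile angle of D_H(μ)), one has (n(H²-1) + n(n-1) μ² (tan φ)^(-2n)) · tan² φ ≤ c(n,H). -/
/-!
Dropping `μ ≥ 0` from the constraint `H tⁿ + μ ≤ tⁿ⁻¹ √(1 + t²)` gives `H t ≤ √(1 + t²)`,
i.e. `(H² - 1) t² ≤ 1`, so `t` is bounded because `H > 1`. Dropping `H tⁿ ≥ 0` instead gives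
`μ² ≤ t²⁽ⁿ⁻¹⁾ (1 + t²)`, so `μ² t⁻²ⁿ · t² ≤ 1 + t² ≤ H² / (H² - 1)`. Both terms of the
potential times `t²` are therefore bounded by constants depending on `n` and `H` only.
-/

open Real

lemma sub_one_mul_sq_le_one_of_mul_le_sqrt {H t : ℝ} (hH : 0 ≤ H) (ht : 0 ≤ t)
    (h : H * t ≤ √(1 + t ^ 2)) : (H ^ 2 - 1) * t ^ 2 ≤ 1 := by
  have := (Real.le_sqrt (by positivity) (by positivity)).1 h
  nlinarith

lemma one_add_sq_le_of_sub_one_mul_sq_le_one {H t : ℝ} (hH : 1 < H)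
    (h : (H ^ 2 - 1) * t ^ 2 ≤ 1) : 1 + t ^ 2 ≤ H ^ 2 / (H ^ 2 - 1) := by
  have hH2 : 0 < H ^ 2 - 1 := by nlinarith
  rw [le_div_iff₀ hH2]
  linarith

section DelaunayConstraint

variable {n : ℕ} {H μ t : ℝ}

lemma mul_le_sqrt_of_delaunay_constraint (hn : n ≠ 0) (hμ : 0 ≤ μ) (ht : 0 < t)
    (h : H * t ^ n + μ ≤ t ^ (n - 1) * √(1 + t ^ 2)) : H * t ≤ √(1 + t ^ 2) := by
  rw [← pow_sub_one_mul hn] at h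
  refine le_of_mul_le_mul_left ?_ (pow_pos ht (n - 1))
  linarith

lemma le_pow_mul_sqrt_of_delaunay_constraint (hH : 0 ≤ H) (ht : 0 ≤ t)
    (h : H * t ^ n + μ ≤ t ^ (n - 1) * √(1 + t ^ 2)) : μ ≤ t ^ (n - 1) * √(1 + t ^ 2) := by
  have : 0 ≤ H * t ^ n := by positivity
  linarith

lemma sq_div_pow_mul_sq_le_of_le_pow_mul_sqrt (hn : n ≠ 0) (hμ : 0 ≤ μ) (ht : 0 < t)
    (h : μ ≤ t ^ (n - 1) * √(1 + t ^ 2)) : μ ^ 2 / t ^ (2 * n) * t ^ 2 ≤ 1 + t ^ 2 := by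
  have hsq : μ ^ 2 ≤ (t ^ (n - 1)) ^ 2 * (1 + t ^ 2) :=
    calc μ ^ 2 ≤ (t ^ (n - 1) * √(1 + t ^ 2)) ^ 2 := pow_le_pow_left₀ hμ h 2
      _ = (t ^ (n - 1)) ^ 2 * (1 + t ^ 2) := by rw [mul_pow, sq_sqrt (by positivity)]
  have ht' : 0 < (t ^ (n - 1)) ^ 2 := by positivity
  rw [pow_mul', ← pow_sub_one_mul hn, mul_pow, div_mul_eq_mul_div,
    mul_div_mul_right _ _ (by positivity), div_le_iff₀ ht', mul_comm]
  exact hsq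

end DelaunayConstraint

/-- There is a constant `c(n,H)` depending only on `n ≥ 2` and `H > 1` such
that for all `μ > 0` and all `t = tan φ > 0` satisfying the hyperbolic Delaunay constraint
`H t^n + μ ≤ t^(n-1) √(1+t²)`, one has
`(n(H²-1) + n(n-1) μ² t^(-2n)) · t² ≤ c(n,H)`. -/
theorem hyperbolic_delaunay_potential_bound (n : ℕ) (hn : 2 ≤ n) (H : ℝ) (hH : 1 < H) :
    ∃ c : ℝ, ∀ μ : ℝ, 0 < μ → ∀ t : ℝ, 0 < t →
      H * t ^ n + μ ≤ t ^ (n - 1) * Real.sqrt (1 + t ^ 2) →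
      ((n : ℝ) * (H ^ 2 - 1) + (n : ℝ) * ((n : ℝ) - 1) * μ ^ 2 / t ^ (2 * n)) * t ^ 2 ≤ c := by
  refine ⟨n + n * (n - 1) * (H ^ 2 / (H ^ 2 - 1)), fun μ hμ t ht h => ?_⟩
  have hn0 : n ≠ 0 := by omega
  have hn1 : (0 : ℝ) ≤ n * (n - 1) :=
    mul_nonneg n.cast_nonneg (sub_nonneg.2 (by exact_mod_cast (by omega : 1 ≤ n)))
  have hbound : (H ^ 2 - 1) * t ^ 2 ≤ 1 :=
    sub_one_mul_sq_le_one_of_mul_le_sqrt (by positivity) ht.le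
      (mul_le_sqrt_of_delaunay_constraint hn0 hμ.le ht h)
  have hμt : μ ^ 2 / t ^ (2 * n) * t ^ 2 ≤ H ^ 2 / (H ^ 2 - 1) :=
    (sq_div_pow_mul_sq_le_of_le_pow_mul_sqrt hn0 hμ.le ht
      (le_pow_mul_sqrt_of_delaunay_constraint (by positivity) ht.le h)).trans
      (one_add_sq_le_of_sub_one_mul_sq_le_one hH hbound)
  calc ((n : ℝ) * (H ^ 2 - 1) + n * (n - 1) * μ ^ 2 / t ^ (2 * n)) * t ^ 2
      = n * ((H ^ 2 - 1) * t ^ 2) + n * (n - 1) * (μ ^ 2 / t ^ (2 * n) * t ^ 2) := by ring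
    _ ≤ n * 1 + n * (n - 1) * (H ^ 2 / (H ^ 2 - 1)) := by gcongr
    _ = n + n * (n - 1) * (H ^ 2 / (H ^ 2 - 1)) := by rw [mul_one]
end

section
/- Let f satisfy the Delaunay ODE f^(n-1)/sqrt(1+f'²) - f^n = μ with 0 < μ < (1/n)((n-1)/n)^(n-1), f(0) = a_-(μ). Then f is T(μ)-periodic and symmetric about each point k·T(μ)/2 (k ∈ ℤ): f(kT(μ)/2 + s) = f(kT(μ)/2 - s) for all s; moreover f(T(μ)/2) = a_+(μ). -/
open Set Filter Topology

noncomputable def RRaux (n : ℕ) (μ : ℝ) (y : ℝ) : ℝ := y ^ (n-1) / (y ^ n + μ)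

noncomputable def RDaux (n : ℕ) (μ : ℝ) (y : ℝ) : ℝ :=
  (((n-1 : ℕ) : ℝ) * y ^ (n-2) * (y ^ n + μ) - y ^ (n-1) * ((n : ℝ) * y ^ (n-1))) / (y ^ n + μ) ^ 2

noncomputable def GGaux (n : ℕ) (μ : ℝ) (y : ℝ) : ℝ := RRaux n μ y * RDaux n μ y

lemma RRaux_hasDerivAt (n : ℕ) (hn : 2 ≤ n) (μ : ℝ) {y : ℝ} (hy : y ^ n + μ ≠ 0) :
    HasDerivAt (RRaux n μ) (RDaux n μ y) y := by
  have h1 : HasDerivAt (fun y : ℝ => y ^ (n-1)) (((n-1 : ℕ) : ℝ) * y ^ (n-1-1)) y :=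
    hasDerivAt_pow (n-1) y
  have h2 : HasDerivAt (fun y : ℝ => y ^ n + μ) ((n : ℝ) * y ^ (n-1)) y :=
    (hasDerivAt_pow n y).add_const μ
  have h3 := h1.div h2 hy
  have e : n - 1 - 1 = n - 2 := by omega
  rw [e] at h3
  exact h3

lemma GGaux_ne (n : ℕ) (hn : 2 ≤ n) (μ : ℝ) (hμ : 0 < μ)
    (hμ' : μ < (1 / n) * (((n : ℝ) - 1) / n) ^ (n - 1))
    {a : ℝ} (ha : 0 < a) (hroot : a ^ n - a ^ (n-1) + μ = 0) : GGaux n μ a ≠ 0 := by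
  have hnR : (0:ℝ) < n := by positivity
  have hnum : a ^ n + μ = a ^ (n-1) := by linarith
  have hpow : a ^ (n-1) ≠ 0 := pow_ne_zero _ ha.ne'
  have hR1 : RRaux n μ a = 1 := by
    unfold RRaux; rw [hnum, div_self hpow]
  have hane : (n : ℝ) - 1 - (n : ℝ) * a ≠ 0 := by
    intro h
    have hae : a = ((n:ℝ) - 1) / n := by field_simp; linarith
    have hsucc : a ^ n = a ^ (n-1) * a := by
      rw [← pow_succ]; congr 1; omega
    have hn0 : (n:ℝ) ≠ 0 := hnR.ne'
    have ha1 : a - 1 = -(1 / n) := by rw [hae]; field_simp; ring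
    rw [hsucc] at hroot
    have h2 : a ^ (n-1) * (a - 1) + μ = 0 := by linear_combination hroot
    rw [ha1] at h2
    have hμeq : μ = a ^ (n-1) / n := by linear_combination h2
    rw [hae] at hμeq
    have he : (1/(n:ℝ)) * (((n:ℝ)-1)/n) ^ (n-1) = (((n:ℝ)-1)/n) ^ (n-1) / n := by ring
    rw [he] at hμ'
    linarith
  have e1 : ((n-1 : ℕ) : ℝ) = (n : ℝ) - 1 := by
    have : (1:ℕ) ≤ n := by omega
    push_cast [Nat.cast_sub this]; ring
  have e2 : a ^ (n-1) = a ^ (n-2) * a := by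
    rw [← pow_succ]; congr 1; omega
  have hRd : RDaux n μ a = (a ^ (n-2) * a ^ (n-1) * (((n:ℝ) - 1) - (n:ℝ) * a)) / (a ^ (n-1)) ^ 2 := by
    unfold RDaux
    rw [hnum, e1]
    congr 1
    linear_combination (-(n:ℝ) * a ^ (n-1)) * e2
  have hRdne : RDaux n μ a ≠ 0 := by
    rw [hRd]
    exact div_ne_zero (mul_ne_zero (mul_ne_zero (pow_ne_zero _ ha.ne') hpow) hane)
      (pow_ne_zero _ hpow)
  unfold GGaux
  rw [hR1, one_mul]
  exact hRdne

lemma V_contDiffAt (n : ℕ) (μ : ℝ) (hμ : 0 < μ) {z0 : ℝ × ℝ} (h : 0 < z0.1) :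
    ContDiffAt ℝ 1 (fun z : ℝ × ℝ => (z.2, GGaux n μ z.1)) z0 := by
  have hden : z0.1 ^ n + μ ≠ 0 := by positivity
  have hden2 : (z0.1 ^ n + μ) ^ 2 ≠ 0 := pow_ne_zero _ hden
  have hplus : ContDiffAt ℝ 1 (fun z : ℝ × ℝ => z.1 ^ n + μ) z0 :=
    ((contDiff_fst.pow n).contDiffAt).add contDiffAt_const
  have h1 : ContDiffAt ℝ 1 (fun z : ℝ × ℝ => RRaux n μ z.1) z0 := by
    unfold RRaux
    exact ((contDiff_fst.pow (n-1)).contDiffAt).div hplus hden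
  have h2 : ContDiffAt ℝ 1 (fun z : ℝ × ℝ => RDaux n μ z.1) z0 := by
    unfold RDaux
    refine ContDiffAt.div ?_ (hplus.pow 2) hden2
    exact ((contDiffAt_const.mul ((contDiff_fst.pow (n-2)).contDiffAt)).mul hplus).sub
      (((contDiff_fst.pow (n-1)).contDiffAt).mul
        (contDiffAt_const.mul ((contDiff_fst.pow (n-1)).contDiffAt)))
  exact ContDiffAt.prodMk contDiff_snd.contDiffAt (h1.mul h2)

lemma sym_of_critical (n : ℕ) (μ : ℝ) (hμ : 0 < μ)
    (f : ℝ → ℝ) (hdf : Differentiable ℝ f) (hdD : Differentiable ℝ (deriv f))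
    (hfpos : ∀ x, 0 < f x)
    (hsecond : ∀ x, deriv (deriv f) x = GGaux n μ (f x))
    (c : ℝ) (hc : deriv f c = 0) (s : ℝ) : f (c + s) = f (c - s) := by
  set V : ℝ × ℝ → ℝ × ℝ := fun z => (z.2, GGaux n μ z.1) with hV
  set u : ℝ → ℝ × ℝ := fun t => (f (c + t), deriv f (c + t)) with hu
  set w : ℝ → ℝ × ℝ := fun t => (f (c - t), -deriv f (c - t)) with hw
  have hu' : ∀ t, HasDerivAt u (V (u t)) t := by
    intro t
    have h1 : HasDerivAt (fun t => f (c + t)) (deriv f (c + t)) t :=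
      ((hdf (c+t)).hasDerivAt).comp_const_add c t
    have h2 : HasDerivAt (fun t => deriv f (c + t)) (deriv (deriv f) (c + t)) t :=
      ((hdD (c+t)).hasDerivAt).comp_const_add c t
    have he : V (u t) = (deriv f (c + t), deriv (deriv f) (c + t)) := by
      simp [hV, hu, hsecond (c+t)]
    rw [he]
    exact h1.prodMk h2
  have hw' : ∀ t, HasDerivAt w (V (w t)) t := by
    intro t
    have h1 : HasDerivAt (fun t => f (c - t)) (-(deriv f (c - t))) t :=
      ((hdf (c-t)).hasDerivAt).comp_const_sub c t
    have h2 : HasDerivAt (fun t => deriv f (c - t)) (-(deriv (deriv f) (c - t))) t :=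
      ((hdD (c-t)).hasDerivAt).comp_const_sub c t
    have h2' : HasDerivAt (fun t => -deriv f (c - t)) (deriv (deriv f) (c - t)) t := by
      have h := h2.neg; rw [neg_neg] at h; exact h
    have he : V (w t) = (-deriv f (c - t), deriv (deriv f) (c - t)) := by
      simp [hV, hw, hsecond (c-t)]
    rw [he]
    exact h1.prodMk h2'
  have hucont : Continuous u :=
    ((hdf.continuous.comp (continuous_const.add continuous_id)).prodMk
      (hdD.continuous.comp (continuous_const.add continuous_id)))
  have hwcont : Continuous w :=
    ((hdf.continuous.comp (continuous_const.sub continuous_id)).prodMk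
      (hdD.continuous.comp (continuous_const.sub continuous_id)).neg)
  set A : Set ℝ := {s | u s = w s} with hA
  have hAc : IsClosed A := isClosed_eq hucont hwcont
  have hAo : IsOpen A := by
    rw [isOpen_iff_mem_nhds]
    intro s0 hs0
    have hpos : 0 < (u s0).1 := hfpos _
    have hcd : ContDiffAt ℝ 1 V (u s0) := V_contDiffAt n μ hμ hpos
    obtain ⟨K, tset, htn, hlip⟩ := hcd.exists_lipschitzOnWith
    have hs0' : u s0 = w s0 := hs0
    have hfe : ∀ᶠ τ in 𝓝 s0, HasDerivAt u (V (u τ)) τ ∧ u τ ∈ tset :=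
      (Filter.Eventually.of_forall hu').and (hucont.continuousAt.eventually_mem htn)
    have hge : ∀ᶠ τ in 𝓝 s0, HasDerivAt w (V (w τ)) τ ∧ w τ ∈ tset :=
      (Filter.Eventually.of_forall hw').and
        (hwcont.continuousAt.eventually_mem (by rw [← hs0']; exact htn))
    have := ODE_solution_unique_of_eventually (v := fun _ => V) (s := fun _ => tset)
      (Filter.Eventually.of_forall (fun _ => hlip)) hfe hge hs0'
    exact this
  have hAuniv : A = univ := IsClopen.eq_univ ⟨hAc, hAo⟩ ⟨0, by simp [hA, hu, hw, hc]⟩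
  have hs : u s = w s := by rw [hA] at hAuniv; exact (hAuniv ▸ mem_univ s : s ∈ {s | u s = w s})
  exact congrArg Prod.fst hs

lemma second_order (n : ℕ) (hn : 2 ≤ n) (μ : ℝ) (hμ : 0 < μ)
    (f : ℝ → ℝ) (hdf : Differentiable ℝ f) (hdD : Differentiable ℝ (deriv f))
    (hcontD2 : Continuous (deriv (deriv f)))
    (hfpos : ∀ x, 0 < f x)
    (hsq : ∀ x, deriv f x ^ 2 = RRaux n μ (f x) ^ 2 - 1)
    (hGnf : ∀ x, deriv f x = 0 → GGaux n μ (f x) ≠ 0)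
    (hex : ∃ x, deriv f x ≠ 0) :
    ∀ x, deriv (deriv f) x = GGaux n μ (f x) := by
  have hden : ∀ x, (f x : ℝ) ^ n + μ ≠ 0 := fun x => by have := hfpos x; positivity
  have hDc := hdD.continuous
  have hstep3 : ∀ x, deriv f x ≠ 0 → deriv (deriv f) x = GGaux n μ (f x) := by
    intro x hx
    have h1 : HasDerivAt (fun x => deriv f x ^ 2) (2 * deriv f x ^ 1 * deriv (deriv f) x) x := by
      exact_mod_cast ((hdD x).hasDerivAt).pow 2
    have h2 : HasDerivAt (fun y => RRaux n μ y ^ 2 - 1)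
        (2 * RRaux n μ (f x) ^ 1 * RDaux n μ (f x)) (f x) := by
      exact_mod_cast ((RRaux_hasDerivAt n hn μ (hden x)).pow 2).sub_const 1
    have h3 := h2.comp x ((hdf x).hasDerivAt)
    simp only [Function.comp_def] at h3
    have hfeq : (fun x => deriv f x ^ 2) = fun x => RRaux n μ (f x) ^ 2 - 1 := funext hsq
    rw [hfeq] at h1
    have h4 := h1.unique h3
    have h2x : (2:ℝ) * deriv f x ≠ 0 := mul_ne_zero two_ne_zero hx
    unfold GGaux
    apply mul_left_cancel₀ h2x
    rw [pow_one, pow_one] at h4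
    linear_combination h4
  have hcG : Continuous fun x => GGaux n μ (f x) := by
    unfold GGaux RRaux RDaux
    have hcf := hdf.continuous
    exact (((hcf.pow _).div ((hcf.pow _).add continuous_const) (fun x => hden x)).mul
      ((((continuous_const.mul (hcf.pow _)).mul ((hcf.pow _).add continuous_const)).sub
        ((hcf.pow _).mul (continuous_const.mul (hcf.pow _)))).div
        (((hcf.pow _).add continuous_const).pow 2) (fun x => pow_ne_zero _ (hden x))))
  have hend : ∀ a b : ℝ, a < b → (∀ y ∈ Icc a b, deriv f y = 0) →
      deriv (deriv f) a = 0 ∧ deriv (deriv f) b = 0 := by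
    intro a b hab h0
    have hua : UniqueDiffWithinAt ℝ (Icc a b) a := uniqueDiffOn_Icc hab a ⟨le_rfl, hab.le⟩
    have hub : UniqueDiffWithinAt ℝ (Icc a b) b := uniqueDiffOn_Icc hab b ⟨hab.le, le_rfl⟩
    constructor
    · have h1 : HasDerivWithinAt (deriv f) (deriv (deriv f) a) (Icc a b) a :=
        ((hdD a).hasDerivAt).hasDerivWithinAt
      have h2 : HasDerivWithinAt (deriv f) 0 (Icc a b) a :=
        (hasDerivWithinAt_const a (Icc a b) (0:ℝ)).congr h0 (h0 a ⟨le_rfl, hab.le⟩)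
      exact (h1.derivWithin hua).symm.trans (h2.derivWithin hua)
    · have h1 : HasDerivWithinAt (deriv f) (deriv (deriv f) b) (Icc a b) b :=
        ((hdD b).hasDerivAt).hasDerivWithinAt
      have h2 : HasDerivWithinAt (deriv f) 0 (Icc a b) b :=
        (hasDerivWithinAt_const b (Icc a b) (0:ℝ)).congr h0 (h0 b ⟨hab.le, le_rfl⟩)
      exact (h1.derivWithin hub).symm.trans (h2.derivWithin hub)
  intro x0
  by_contra hx0
  obtain ⟨xs, hxs⟩ := hex
  set Z : Set ℝ := {x | deriv (deriv f) x = GGaux n μ (f x)} with hZ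
  have hZc : IsClosed Z := isClosed_eq hcontD2 hcG
  have hzero : ∀ x, x ∉ Z → deriv f x = 0 := by
    intro x hx; by_contra h; exact hx (hstep3 x h)
  have hxsZ : xs ∈ Z := hstep3 xs hxs
  have hx0Z : x0 ∉ Z := hx0
  have hne : x0 ≠ xs := fun h => hx0Z (by rw [hZ]; rw [h]; exact hxsZ)
  rcases lt_or_gt_of_ne hne with hlt | hgt
  · have hSc : IsClosed (Z ∩ Icc x0 xs) := hZc.inter isClosed_Icc
    have hSne : (Z ∩ Icc x0 xs).Nonempty := ⟨xs, hxsZ, ⟨hlt.le, le_rfl⟩⟩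
    have hSbdd : BddBelow (Z ∩ Icc x0 xs) := ⟨x0, fun y hy => hy.2.1⟩
    set q := sInf (Z ∩ Icc x0 xs) with hq
    have hqS : q ∈ Z ∩ Icc x0 xs := hSc.csInf_mem hSne hSbdd
    have hlt0q : x0 < q := lt_of_le_of_ne hqS.2.1 (fun h => hx0Z (by rw [h]; exact hqS.1))
    have hIco : ∀ y ∈ Ico x0 q, deriv f y = 0 := by
      intro y hy
      apply hzero
      intro hyZ
      have hyge : q ≤ y := csInf_le hSbdd ⟨hyZ, hy.1, hy.2.le.trans hqS.2.2⟩
      exact absurd hyge (not_le.mpr hy.2)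
    have hIcc : ∀ y ∈ Icc x0 q, deriv f y = 0 := by
      have hcl : EqOn (deriv f) (fun _ => (0:ℝ)) (closure (Ico x0 q)) :=
        EqOn.closure (fun y hy => hIco y hy) hDc continuous_const
      intro y hy
      exact hcl (by rw [closure_Ico hlt0q.ne]; exact hy)
    have hd0 : deriv (deriv f) q = 0 := (hend x0 q hlt0q hIcc).2
    exact hGnf q (hIcc q ⟨hlt0q.le, le_rfl⟩) (hqS.1.symm.trans hd0)
  · have hSc : IsClosed (Z ∩ Icc xs x0) := hZc.inter isClosed_Icc
    have hSne : (Z ∩ Icc xs x0).Nonempty := ⟨xs, hxsZ, ⟨le_rfl, hgt.le⟩⟩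
    have hSbdd : BddAbove (Z ∩ Icc xs x0) := ⟨x0, fun y hy => hy.2.2⟩
    set q := sSup (Z ∩ Icc xs x0) with hq
    have hqS : q ∈ Z ∩ Icc xs x0 := hSc.csSup_mem hSne hSbdd
    have hqx0 : q < x0 := lt_of_le_of_ne hqS.2.2 (fun h => hx0Z (by rw [← h]; exact hqS.1))
    have hIoc : ∀ y ∈ Ioc q x0, deriv f y = 0 := by
      intro y hy
      apply hzero
      intro hyZ
      have hyle : y ≤ q := le_csSup hSbdd ⟨hyZ, hqS.2.1.trans hy.1.le, hy.2⟩
      exact absurd hyle (not_le.mpr hy.1)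
    have hIcc : ∀ y ∈ Icc q x0, deriv f y = 0 := by
      have hcl : EqOn (deriv f) (fun _ => (0:ℝ)) (closure (Ioc q x0)) :=
        EqOn.closure (fun y hy => hIoc y hy) hDc continuous_const
      intro y hy
      exact hcl (by rw [closure_Ioc hqx0.ne]; exact hy)
    have hd0 : deriv (deriv f) q = 0 := (hend q x0 hqx0 hIcc).1
    exact hGnf q (hIcc q ⟨le_rfl, hqx0.le⟩) (hqS.1.symm.trans hd0)


/-- Let `f` satisfy the Delaunay ODE `f^(n-1)/√(1+f'²) - f^n = μ` with
`0 < μ < (1/n)((n-1)/n)^(n-1)` and `f(0) = a₋(μ)`, and let `T > 0` be the distance between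
consecutive points where `f = a₋(μ)`. Then `f` is `T`-periodic and symmetric about each
point `k·T/2` (`k ∈ ℤ`), and `f(T/2) = a₊(μ)`. -/
theorem delaunay_profile_periodic_symmetric (n : ℕ) (hn : 2 ≤ n) (μ : ℝ)
    (hμ : 0 < μ) (hμ' : μ < (1 / n) * (((n : ℝ) - 1) / n) ^ (n - 1))
    (f : ℝ → ℝ) (hf : ContDiff ℝ (⊤ : ℕ∞) f) (hfpos : ∀ x, 0 < f x)
    (hode : ∀ x, f x ^ (n - 1) / Real.sqrt (1 + (deriv f x) ^ 2) - f x ^ n = μ)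
    (am ap : ℝ) (ham : 0 < am) (hle : am ≤ ap)
    (hrootm : am ^ n - am ^ (n - 1) + μ = 0)
    (hrootp : ap ^ n - ap ^ (n - 1) + μ = 0)
    (hall : ∀ t : ℝ, 0 < t → t ^ n - t ^ (n - 1) + μ = 0 → t = am ∨ t = ap)
    (hinit : f 0 = am)
    (T : ℝ) (hT : 0 < T) (hfT : f T = am) (hmin : ∀ x ∈ Ioo 0 T, f x ≠ am) :
    Function.Periodic f T ∧
    (∀ k : ℤ, ∀ s : ℝ, f ((k : ℝ) * T / 2 + s) = f ((k : ℝ) * T / 2 - s)) ∧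
    f (T / 2) = ap := by
  have hfi : ContDiff ℝ ((⊤ : ℕ∞) : WithTop ℕ∞) f := hf.of_le (mod_cast le_top)
  obtain ⟨hdf, hDsm⟩ := contDiff_infty_iff_deriv.mp hfi
  obtain ⟨hdD, hD2sm⟩ := contDiff_infty_iff_deriv.mp hDsm
  have hcontD2 : Continuous (deriv (deriv f)) := hD2sm.continuous
  have hsq : ∀ x, deriv f x ^ 2 = RRaux n μ (f x) ^ 2 - 1 := by
    intro x
    have hpos : (0:ℝ) < 1 + deriv f x ^ 2 := by positivity
    have hS : 0 < Real.sqrt (1 + deriv f x ^ 2) := Real.sqrt_pos.mpr hpos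
    have hdenx : (0:ℝ) < f x ^ n + μ := by have := hfpos x; positivity
    have h1 := hode x
    have h2 : f x ^ (n-1) / Real.sqrt (1 + deriv f x ^ 2) = f x ^ n + μ := by linarith
    have h3 : Real.sqrt (1 + deriv f x ^ 2) = RRaux n μ (f x) := by
      unfold RRaux
      rw [eq_div_iff hdenx.ne']
      rw [div_eq_iff hS.ne'] at h2
      linear_combination -h2
    have h4 := Real.sq_sqrt hpos.le
    rw [h3] at h4
    linarith
  have hRroot : ∀ a : ℝ, 0 < a → a ^ n - a ^ (n-1) + μ = 0 → RRaux n μ a = 1 := by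
    intro a ha hr
    unfold RRaux
    rw [show a ^ n + μ = a ^ (n-1) by linarith, div_self (pow_ne_zero _ ha.ne')]
  have hD0 : ∀ x, (f x = am ∨ f x = ap) → deriv f x = 0 := by
    intro x hx
    have h1 : RRaux n μ (f x) = 1 := by
      rcases hx with h | h
      · rw [h]; exact hRroot am ham hrootm
      · rw [h]; exact hRroot ap (lt_of_lt_of_le ham hle) hrootp
    have h2 := hsq x
    rw [h1] at h2
    have h3 : deriv f x ^ 2 = 0 := by linarith
    exact pow_eq_zero_iff two_ne_zero |>.mp h3
  have hroot : ∀ x, deriv f x = 0 → f x = am ∨ f x = ap := by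
    intro x hx
    have h1 := hsq x
    rw [hx] at h1
    have hRpos : 0 < RRaux n μ (f x) := by
      unfold RRaux; have := hfpos x; positivity
    have h2 : (RRaux n μ (f x) - 1) * (RRaux n μ (f x) + 1) = 0 := by linear_combination -h1
    rcases mul_eq_zero.mp h2 with h3 | h3
    · have hR1 : RRaux n μ (f x) = 1 := by linarith
      have hdenx : (0:ℝ) < f x ^ n + μ := by have := hfpos x; positivity
      unfold RRaux at hR1
      rw [div_eq_one_iff_eq hdenx.ne'] at hR1
      exact hall (f x) (hfpos x) (by linarith)
    · linarith
  have hGnf : ∀ x, deriv f x = 0 → GGaux n μ (f x) ≠ 0 := by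
    intro x hx
    rcases hroot x hx with h | h
    · rw [h]; exact GGaux_ne n hn μ hμ hμ' ham hrootm
    · rw [h]; exact GGaux_ne n hn μ hμ hμ' (lt_of_lt_of_le ham hle) hrootp
  have hex : ∃ x, deriv f x ≠ 0 := by
    by_contra hc; push_neg at hc
    have h1 := is_const_of_deriv_eq_zero hdf hc (T/2) 0
    exact hmin (T/2) ⟨half_pos hT, half_lt_self hT⟩ (h1.trans hinit)
  have hsecond := second_order n hn μ hμ f hdf hdD hcontD2 hfpos hsq hGnf hex
  have hsym : ∀ c, deriv f c = 0 → ∀ s, f (c + s) = f (c - s) :=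
    fun c hc s => sym_of_critical n μ hμ f hdf hdD hfpos hsecond c hc s
  have hf0T : f 0 = f T := hinit.trans hfT.symm
  obtain ⟨c, hcmem, hc⟩ := exists_deriv_eq_zero hT (hf.continuous.continuousOn) hf0T
  have hfc : f c = ap := (hroot c hc).resolve_left (hmin c hcmem)
  have hcT : c = T / 2 := by
    by_contra hne
    rcases lt_or_gt_of_ne hne with h | h
    · have h1 : f (c + c) = am := by rw [hsym c hc c, sub_self]; exact hinit
      exact hmin (c + c) ⟨by linarith [hcmem.1], by linarith⟩ h1
    · have h1 : f (c + (c - T)) = am := by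
        rw [hsym c hc (c - T), show c - (c - T) = T by ring]; exact hfT
      exact hmin (c + (c - T)) ⟨by linarith [hcmem.1], by linarith [hcmem.2]⟩ h1
  have hfhalf : f (T / 2) = ap := hcT ▸ hfc
  have hchalf : deriv f (T / 2) = 0 := hcT ▸ hc
  have hsym0 := hsym 0 (hD0 0 (Or.inl hinit))
  have hsymH := hsym (T/2) hchalf
  have hper : Function.Periodic f T := by
    intro x
    have h1 := hsymH (x + T/2)
    rw [show T/2 + (x + T/2) = x + T by ring, show T/2 - (x + T/2) = 0 - x by ring] at h1
    rw [h1, ← hsym0 x, zero_add]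
  have hshift : ∀ (m : ℤ) (x : ℝ), f (x + (m:ℝ) * T) = f x := fun m x => (hper.int_mul m) x
  refine ⟨hper, fun k s => ?_, hfhalf⟩
  rcases Int.even_or_odd k with ⟨m, hm⟩ | ⟨m, hm⟩
  · rw [show (k:ℝ)*T/2 + s = s + (m:ℝ)*T by push_cast [hm]; ring,
        show (k:ℝ)*T/2 - s = -s + (m:ℝ)*T by push_cast [hm]; ring,
        hshift, hshift]
    have h1 := hsym0 s
    rw [zero_add, zero_sub] at h1
    exact h1
  · rw [show (k:ℝ)*T/2 + s = (T/2 + s) + (m:ℝ)*T by push_cast [hm]; ring,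
        show (k:ℝ)*T/2 - s = (T/2 - s) + (m:ℝ)*T by push_cast [hm]; ring,
        hshift, hshift]
    exact hsymH s
end

section
/- In dimension n = 2 (surfaces in ℝ³), the period T(μ) of the Delaunay unduloid with cmc 1 and weight μ ∈ (0, 1/4] satisfies 2 ≤ T(μ) ≤ π, where T(μ) is the distance between consecutive minima of the profile f solving f/sqrt(1+f'²) - f² = μ. -/
open Real intervalIntegral
open scoped ContDiff


lemma sin_3pi2 : Real.sin (3*π/2) = -1 := by
  rw [show (3*π/2 : ℝ) = π/2 + π by ring, Real.sin_add_pi, Real.sin_pi_div_two]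

lemma abs_cos_int : ∫ t in (0:ℝ)..(2*π), |Real.cos t| = 4 := by
  have h1 : ∫ t in (0:ℝ)..(π/2), |Real.cos t| = 1 := by
    rw [intervalIntegral.integral_congr (g := Real.cos)]
    · simp [integral_cos]
    · intro t ht
      rw [Set.uIcc_of_le (by positivity)] at ht
      exact abs_of_nonneg (Real.cos_nonneg_of_mem_Icc ⟨by linarith [ht.1, pi_pos], ht.2⟩)
  have h2 : ∫ t in (π/2)..(3*π/2), |Real.cos t| = 2 := by
    rw [intervalIntegral.integral_congr (g := fun t => -Real.cos t)]
    · simp [integral_cos, sin_3pi2]; ring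
    · intro t ht
      rw [Set.uIcc_of_le (by linarith [pi_pos])] at ht
      exact abs_of_nonpos (Real.cos_nonpos_of_pi_div_two_le_of_le ht.1 (by linarith [ht.2, pi_pos]))
  have h3 : ∫ t in (3*π/2)..(2*π), |Real.cos t| = 1 := by
    rw [intervalIntegral.integral_congr (g := Real.cos)]
    · simp [integral_cos, sin_3pi2]
    · intro t ht
      rw [Set.uIcc_of_le (by linarith [pi_pos])] at ht
      have : Real.cos (t - 2*π) = Real.cos t := by
        rw [Real.cos_sub_two_pi]
      rw [← this]
      show |Real.cos t| = _
      rw [← this]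
      apply abs_of_nonneg
      apply Real.cos_nonneg_of_mem_Icc
      constructor
      · simp only [Set.mem_Icc] at ht ⊢; linarith [ht.1]
      · simp only [Set.mem_Icc] at ht ⊢; linarith [ht.2]
  have hint : ∀ a b : ℝ, IntervalIntegrable (fun t => |Real.cos t|) MeasureTheory.volume a b :=
    fun a b => (Real.continuous_cos.abs).intervalIntegrable a b
  have e1 := intervalIntegral.integral_add_adjacent_intervals (a := (0:ℝ)) (b := π/2) (c := 3*π/2) (hint _ _) (hint _ _)
  have e2 := intervalIntegral.integral_add_adjacent_intervals (a := (0:ℝ)) (b := 3*π/2) (c := 2*π) (hint _ _) (hint _ _)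
  rw [h1, h2] at e1
  rw [← e1, h3] at e2
  linarith [e2]



lemma key_integral (μ e : ℝ) (hμ : 0 < μ) (he : 0 < e) (h1 : e^2 + 4*μ = 1) :
    2 ≤ (∫ t in (0:ℝ)..(2*π), (Real.sqrt (e^2 * Real.cos t^2 + 4*μ) - e * Real.cos t)/2) ∧
    (∫ t in (0:ℝ)..(2*π), (Real.sqrt (e^2 * Real.cos t^2 + 4*μ) - e * Real.cos t)/2) ≤ π := by
  have hScont : Continuous (fun t => Real.sqrt (e^2 * Real.cos t^2 + 4*μ)) := by
    apply Real.continuous_sqrt.comp; continuity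
  have hSint : IntervalIntegrable (fun t => Real.sqrt (e^2 * Real.cos t^2 + 4*μ))
      MeasureTheory.volume 0 (2*π) := hScont.intervalIntegrable _ _
  have hcint : IntervalIntegrable (fun t => e * Real.cos t) MeasureTheory.volume 0 (2*π) :=
    (continuous_const.mul Real.continuous_cos).intervalIntegrable _ _
  have hsplit : (∫ t in (0:ℝ)..(2*π), (Real.sqrt (e^2 * Real.cos t^2 + 4*μ) - e * Real.cos t)/2)
      = (∫ t in (0:ℝ)..(2*π), Real.sqrt (e^2 * Real.cos t^2 + 4*μ))/2 := by
    have : (∫ t in (0:ℝ)..(2*π), (Real.sqrt (e^2 * Real.cos t^2 + 4*μ) - e * Real.cos t)/2)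
        = (∫ t in (0:ℝ)..(2*π), (Real.sqrt (e^2 * Real.cos t^2 + 4*μ) - e * Real.cos t))/2 := by
      rw [← intervalIntegral.integral_div]
    rw [this, intervalIntegral.integral_sub hSint hcint]
    rw [intervalIntegral.integral_const_mul, integral_cos]
    simp [Real.sin_two_pi]
  rw [hsplit]
  have twopi : (0:ℝ) ≤ 2*π := by positivity
  constructor
  · -- lower bound
    have hmono : (∫ t in (0:ℝ)..(2*π), (e^2 * |Real.cos t| + 4*μ)) ≤
        ∫ t in (0:ℝ)..(2*π), Real.sqrt (e^2 * Real.cos t^2 + 4*μ) := by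
      apply intervalIntegral.integral_mono_on twopi _ hSint
      · intro t _
        have hc : |Real.cos t| ≤ 1 := abs_cos_le_one t
        rw [show e^2 * Real.cos t^2 + 4*μ = (e^2 * Real.cos t^2 + 4*μ) by ring]
        have h0 : (0:ℝ) ≤ e^2 * |Real.cos t| + 4*μ := by positivity
        rw [← Real.sqrt_sq h0]
        apply Real.sqrt_le_sqrt
        have habs : |Real.cos t|^2 = Real.cos t^2 := sq_abs _
        set a := |Real.cos t| with ha
        have hid : (e^2*a+4*μ)^2 - (e^2*a^2+4*μ) = -(4*μ*e^2*(a-1)^2) := by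
          have h4 : 4*μ = 1 - e^2 := by linarith
          rw [h4]; ring
        have hnn : 0 ≤ 4*μ*e^2*(a-1)^2 := by positivity
        calc (e^2*a+4*μ)^2 ≤ e^2*a^2+4*μ := by linarith
          _ = e^2*Real.cos t^2 + 4*μ := by rw [← habs]
      · exact ((continuous_const.mul Real.continuous_cos.abs).add continuous_const).intervalIntegrable _ _
    have hval : (∫ t in (0:ℝ)..(2*π), (e^2 * |Real.cos t| + 4*μ)) = e^2 * 4 + 4*μ*(2*π) := by
      rw [intervalIntegral.integral_add (f := fun t => e^2 * |Real.cos t|) (g := fun _ => 4*μ) ((continuous_const.mul Real.continuous_cos.abs).intervalIntegrable _ _)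
        (intervalIntegrable_const), intervalIntegral.integral_const_mul, abs_cos_int]
      simp; ring
    have hπ : 2 < π := by linarith [Real.pi_gt_three]
    nlinarith [hmono, hval]
  · -- upper bound
    have hmono : (∫ t in (0:ℝ)..(2*π), Real.sqrt (e^2 * Real.cos t^2 + 4*μ)) ≤
        ∫ t in (0:ℝ)..(2*π), (1:ℝ) := by
      apply intervalIntegral.integral_mono_on twopi hSint intervalIntegrable_const
      intro t _
      rw [show (1:ℝ) = Real.sqrt 1 by simp]
      apply Real.sqrt_le_sqrt
      nlinarith [Real.cos_sq_le_one t, sq_nonneg e]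
    simp at hmono
    linarith [hmono]



set_option maxHeartbeats 2000000 in
/-- In dimension `n = 2` (cmc-1 surfaces in ℝ³), the period `T(μ)` of the
Delaunay unduloid with weight `μ ∈ (0, 1/4]` satisfies `2 ≤ T(μ) ≤ π`, where `T(μ)` is the
minimal period of the profile `f` solving `f/√(1+f'²) - f² = μ`. -/
theorem delaunay_period_bounds (μ : ℝ) (hμ : 0 < μ) (hμ' : μ ≤ 1 / 4)
    (f : ℝ → ℝ) (hf : ContDiff ℝ (⊤ : ℕ∞) f) (hfpos : ∀ x, 0 < f x)
    (hode : ∀ x, f x / Real.sqrt (1 + (deriv f x) ^ 2) - f x ^ 2 = μ)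
    (T : ℝ) (hT : 0 < T) (hper : Function.Periodic f T)
    (hminimal : ∀ T' : ℝ, 0 < T' → Function.Periodic f T' → T ≤ T') :
    2 ≤ T ∧ T ≤ Real.pi := by
  -- basic differentiability
  have hfi : ContDiff ℝ ∞ f := hf.of_le (by simp)
  have hfd : Differentiable ℝ f := hfi.differentiable (by simp)
  have hfc : Continuous f := hfd.continuous
  have hf1 : ContDiff ℝ ∞ (deriv f) := (contDiff_infty_iff_deriv.mp hfi).2
  have hfd' : Differentiable ℝ (deriv f) := hf1.differentiable (by simp)
  have hf'c : Continuous (deriv f) := hfd'.continuous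
  have hf''c : Continuous (deriv (deriv f)) :=
    ((contDiff_infty_iff_deriv.mp hf1).2).continuous
  have hfne : ∀ x, f x ≠ 0 := fun x => (hfpos x).ne'
  -- constant f is impossible
  have hconst_false : (∀ x y : ℝ, f x = f y) → False := by
    intro hc
    have hper2 : Function.Periodic f (T/2) := fun x => hc _ _
    have := hminimal (T/2) (by linarith) hper2
    linarith
  -- rewrite ODE
  have hsq : ∀ x, 0 < Real.sqrt (1 + (deriv f x)^2) := by
    intro x; apply Real.sqrt_pos.mpr; positivity
  have hode' : ∀ x, f x = (μ + f x^2) * Real.sqrt (1 + (deriv f x)^2) := by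
    intro x
    have h : f x / Real.sqrt (1 + (deriv f x)^2) = μ + f x^2 := by linarith [hode x]
    rw [div_eq_iff (hsq x).ne'] at h
    exact h
  have hC : ∀ x, (μ + f x^2)^2 * (1 + (deriv f x)^2) = (f x)^2 := by
    intro x
    have h := hode' x
    have h2 : Real.sqrt (1 + (deriv f x)^2)^2 = 1 + (deriv f x)^2 :=
      Real.sq_sqrt (by positivity)
    calc (μ + f x^2)^2 * (1 + (deriv f x)^2) = ((μ + f x^2) * Real.sqrt (1 + (deriv f x)^2))^2 := by
          rw [mul_pow, h2]
      _ = (f x)^2 := by rw [← h]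
  have hcpos : ∀ x, 0 < μ + f x^2 := fun x => by positivity
  have hge : ∀ x, μ + f x^2 ≤ f x := by
    intro x
    have h1 : (1:ℝ) ≤ Real.sqrt (1 + (deriv f x)^2) := by
      nlinarith [Real.sq_sqrt (show (0:ℝ) ≤ 1 + (deriv f x)^2 by positivity),
        Real.sqrt_nonneg (1 + (deriv f x)^2), sq_nonneg (deriv f x)]
    nlinarith [hode' x, hcpos x]
  -- μ < 1/4
  have hμlt : μ < 1/4 := by
    rcases lt_or_eq_of_le hμ' with h | h
    · exact h
    · exfalso
      apply hconst_false
      have : ∀ x, f x = 1/2 := by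
        intro x
        have := hge x
        nlinarith [sq_nonneg (2*f x - 1)]
      intro x y; rw [this x, this y]
  set e := Real.sqrt (1 - 4*μ) with he_def
  have he2 : e^2 = 1 - 4*μ := Real.sq_sqrt (by linarith)
  have hepos : 0 < e := Real.sqrt_pos.mpr (by linarith)
  have helt1 : e < 1 := by nlinarith [he2, hepos]
  have h14 : e^2 + 4*μ = 1 := by linarith
  -- second order ODE everywhere
  have hW : ∀ x, 2*(μ + f x^2)*(2*f x*deriv f x)*(1 + (deriv f x)^2)
      + (μ + f x^2)^2*(2*deriv f x*deriv (deriv f) x) - 2*f x*deriv f x = 0 := by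
    intro x
    have hfx : HasDerivAt f (deriv f x) x := (hfd x).hasDerivAt
    have hf'x : HasDerivAt (deriv f) (deriv (deriv f) x) x := (hfd' x).hasDerivAt
    have ha : HasDerivAt (fun y => μ + f y^2) (2*f x*deriv f x) x := by
      have := (hasDerivAt_const x μ).fun_add (hfx.fun_pow 2)
      simpa using this
    have hb : HasDerivAt (fun y => (μ + f y^2)^2) (2*(μ + f x^2)*(2*f x*deriv f x)) x := by
      have := ha.fun_pow 2
      simpa using this
    have hc2 : HasDerivAt (fun y => 1 + (deriv f y)^2) (2*deriv f x*deriv (deriv f) x) x := by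
      have := (hasDerivAt_const x (1:ℝ)).fun_add (hf'x.fun_pow 2)
      simpa using this
    have hd2 : HasDerivAt (fun y => f y^2) (2*f x*deriv f x) x := by
      have := hfx.fun_pow 2
      simpa using this
    have h1 : HasDerivAt (fun y => (μ + f y^2)^2*(1+(deriv f y)^2) - f y^2)
        (2*(μ + f x^2)*(2*f x*deriv f x)*(1 + (deriv f x)^2)
          + (μ + f x^2)^2*(2*deriv f x*deriv (deriv f) x) - 2*f x*deriv f x) x := by
      have := (hb.fun_mul hc2).fun_sub hd2
      convert this using 1 <;> ring
    have h2 : (fun y => (μ + f y^2)^2*(1+(deriv f y)^2) - f y^2) = fun _ => (0:ℝ) := by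
      funext y; rw [hC y]; ring
    rw [h2] at h1
    exact h1.unique (hasDerivAt_const x 0)
  have hGopen : ∀ x, deriv f x ≠ 0 →
      deriv (deriv f) x * f x * (μ + f x^2) - (μ - f x^2) * (1 + (deriv f x)^2) = 0 := by
    intro x hx
    have h := hW x
    have hc := hC x
    have h3 : 2*deriv f x*(2*f x*(μ + f x^2)*(1 + (deriv f x)^2)
        + (μ + f x^2)^2*deriv (deriv f) x - f x) = 0 := by linear_combination h
    have hX : 2*f x*(μ + f x^2)*(1 + (deriv f x)^2)
        + (μ + f x^2)^2*deriv (deriv f) x - f x = 0 := by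
      rcases mul_eq_zero.mp h3 with h4 | h4
      · exact absurd (by linarith [mul_eq_zero.mp h4] : deriv f x = 0) hx
      · exact h4
    have hkey : (deriv (deriv f) x * f x * (μ + f x^2) - (μ - f x^2) * (1 + (deriv f x)^2))
        * (μ + f x^2)^2 = 0 := by
      linear_combination (f x * (μ + f x^2)) * hX
        + (-(μ - f x^2) - 2*f x^2) * hc
    have hne2 : ((μ + f x^2)^2 : ℝ) ≠ 0 := pow_ne_zero 2 (hcpos x).ne'
    exact (mul_eq_zero.mp hkey).resolve_right hne2
  have hG : ∀ x, deriv (deriv f) x * f x * (μ + f x^2) = (μ - f x^2) * (1 + (deriv f x)^2) := by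
    set G : ℝ → ℝ := fun x =>
      deriv (deriv f) x * f x * (μ + f x^2) - (μ - f x^2)*(1 + (deriv f x)^2) with hGdef
    have hGcont : Continuous G := by
      apply Continuous.sub
      · exact (hf''c.mul hfc).mul (continuous_const.add (hfc.pow 2))
      · exact (continuous_const.sub (hfc.pow 2)).mul (continuous_const.add (hf'c.pow 2))
    have hclosed : IsClosed {x | G x = 0} := isClosed_eq hGcont continuous_const
    have hGcl : closure {x | deriv f x ≠ 0} ⊆ {x | G x = 0} :=
      hclosed.closure_subset_iff.mpr (fun x hx => hGopen x hx)
    set D := interior {x | deriv f x = 0} with hDdef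
    have hDsub : D ⊆ {x | deriv f x = 0} := interior_subset
    have hD0 : ∀ x ∈ D, deriv (deriv f) x = 0 := by
      intro x hx
      have hev : deriv f =ᶠ[nhds x] (fun _ => (0:ℝ)) :=
        Filter.eventuallyEq_of_mem (isOpen_interior.mem_nhds hx) (fun y hy => hDsub hy)
      rw [hev.deriv_eq]
      simp
    have hDval : ∀ x ∈ D, ((1-e)/2)^2 * e^2 ≤ (G x)^2 := by
      intro x hx
      have h0 : deriv f x = 0 := hDsub hx
      have hcx := hC x
      rw [h0] at hcx
      have hcx2 : (μ + f x^2)^2 = f x^2 := by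
        linear_combination hcx
      have hroot : μ + f x^2 = f x := by
        nlinarith [hcpos x, hfpos x, hcx2]
      have hsq1 : (2*f x - 1)^2 = e^2 := by linear_combination 4*hroot - he2
      have hGval : G x = -(μ - f x^2) := by
        rw [hGdef]
        simp only [h0, hD0 x hx]
        ring
      have hGsq : (G x)^2 = f x^2 * e^2 := by
        rw [hGval]
        have : μ - f x^2 = f x - 2*f x^2 := by linarith [hroot]
        rw [this]
        nlinarith [hsq1]
      rw [hGsq]
      have hflb : (1-e)/2 ≤ f x := by nlinarith [hsq1, hfpos x, hepos]
      have h1e : 0 < (1-e)/2 := by linarith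
      nlinarith [hflb, h1e, hepos, sq_nonneg (f x - (1-e)/2)]
    have hDclosed : closure D ⊆ D := by
      intro x hx
      by_contra hxD
      have h1 : x ∈ closure {y | deriv f y ≠ 0} := by
        have : {y | deriv f y ≠ 0} = {y | deriv f y = 0}ᶜ := rfl
        rw [this, closure_compl]
        exact hxD
      have hGx : G x = 0 := hGcl h1
      have h3 : ((1-e)/2)^2 * e^2 ≤ (G x)^2 := by
        have hcl : IsClosed {y | ((1-e)/2)^2 * e^2 ≤ (G y)^2} :=
          isClosed_le continuous_const (hGcont.pow 2)
        exact hcl.closure_subset_iff.mpr (fun y hy => hDval y hy) hx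
      rw [hGx] at h3
      norm_num at h3
      have hpos2 : 0 < ((1-e)/2)^2 * e^2 :=
        mul_pos (pow_pos (by linarith : (0:ℝ) < (1-e)/2) 2) (pow_pos hepos 2)
      linarith
    have hDclopen : IsClopen D :=
      ⟨closure_subset_iff_isClosed.mp hDclosed, isOpen_interior⟩
    rcases isClopen_iff.mp hDclopen with hD | hD
    · intro x
      have hx : x ∈ closure {y | deriv f y ≠ 0} := by
        have : {y | deriv f y ≠ 0} = {y | deriv f y = 0}ᶜ := rfl
        rw [this, closure_compl, ← hDdef, hD]
        simp
      have := hGcl hx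
      simp only [hGdef, Set.mem_setOf_eq] at this
      linarith [this]
    · exfalso
      apply hconst_false
      apply is_const_of_deriv_eq_zero hfd
      intro x
      exact hDsub (by rw [hD]; exact Set.mem_univ x)
  -- P, Q and the circle
  set P : ℝ → ℝ := fun x => (μ - f x^2)/(e * f x) with hP_def
  set Q : ℝ → ℝ := fun x => deriv f x * (μ + f x^2)/(e * f x) with hQ_def
  have hPQ1 : ∀ x, P x^2 + Q x^2 = 1 := by
    intro x
    have hc := hC x
    simp only [hP_def, hQ_def]
    field_simp [hP_def, hQ_def, hfne x, hepos.ne']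
    nlinarith [hc, he2]
  have hP' : ∀ x, HasDerivAt P (-Q x / f x) x := by
    intro x
    have hfx : HasDerivAt f (deriv f x) x := (hfd x).hasDerivAt
    have hnum : HasDerivAt (fun y => μ - f y^2) (-(2 * f x * deriv f x)) x := by
      have := (hasDerivAt_const x μ).fun_sub (hfx.fun_pow 2)
      simpa using this
    have hden : HasDerivAt (fun y => e * f y) (e * deriv f x) x := hfx.const_mul e
    have h := hnum.fun_div hden (mul_ne_zero hepos.ne' (hfne x))
    refine h.congr_deriv (Eq.symm ?_)
    simp only [hQ_def]
    have h1 := hfne x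
    have h2 := hepos.ne'
    field_simp
    ring
  have hQ' : ∀ x, HasDerivAt Q (P x / f x) x := by
    intro x
    have hfx : HasDerivAt f (deriv f x) x := (hfd x).hasDerivAt
    have hf'x : HasDerivAt (deriv f) (deriv (deriv f) x) x := (hfd' x).hasDerivAt
    have hnum : HasDerivAt (fun y => deriv f y * (μ + f y^2))
        (deriv (deriv f) x * (μ + f x^2) + deriv f x * (2 * f x * deriv f x)) x := by
      have := hf'x.fun_mul ((hasDerivAt_const x μ).fun_add (hfx.fun_pow 2))
      simpa using this
    have hden : HasDerivAt (fun y => e * f y) (e * deriv f x) x := hfx.const_mul e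
    have h := hnum.fun_div hden (mul_ne_zero hepos.ne' (hfne x))
    refine h.congr_deriv (Eq.symm ?_)
    simp only [hP_def]
    have h1 := hfne x
    have h2 := hepos.ne'
    have h3 := hG x
    field_simp
    linear_combination (-1) * h3
  -- angle function θ
  have hfinvc : Continuous fun t => (f t)⁻¹ := hfc.inv₀ hfne
  obtain ⟨θ₀, hcos₀, hsin₀⟩ : ∃ θ₀, Real.cos θ₀ = P 0 ∧ Real.sin θ₀ = Q 0 := by
    have h1 := hPQ1 0
    have hb1 : -1 ≤ P 0 := by nlinarith [sq_nonneg (Q 0), sq_nonneg (P 0 + 1)]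
    have hb2 : P 0 ≤ 1 := by nlinarith [sq_nonneg (Q 0), sq_nonneg (P 0 - 1)]
    have habs : Real.sqrt (1 - P 0^2) = |Q 0| := by
      rw [show 1 - P 0^2 = Q 0^2 by linarith, Real.sqrt_sq_eq_abs]
    rcases le_or_gt 0 (Q 0) with hq | hq
    · exact ⟨Real.arccos (P 0), Real.cos_arccos hb1 hb2,
        by rw [Real.sin_arccos, habs, abs_of_nonneg hq]⟩
    · exact ⟨-Real.arccos (P 0), by rw [Real.cos_neg]; exact Real.cos_arccos hb1 hb2,
        by rw [Real.sin_neg, Real.sin_arccos, habs, abs_of_neg hq]; ring⟩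
  set θ : ℝ → ℝ := fun x => θ₀ + ∫ t in (0:ℝ)..x, (f t)⁻¹ with hθ_def
  have hθ0 : θ 0 = θ₀ := by simp [hθ_def]
  have hθ' : ∀ x, HasDerivAt θ (f x)⁻¹ x := by
    intro x
    apply HasDerivAt.const_add
    exact intervalIntegral.integral_hasDerivAt_right
      (hfinvc.intervalIntegrable _ _)
      (hfinvc.stronglyMeasurableAtFilter _ _)
      hfinvc.continuousAt
  -- P = cos θ, Q = sin θ
  have hPcosQsin : ∀ x, P x = Real.cos (θ x) ∧ Q x = Real.sin (θ x) := by
    have hR' : ∀ x, HasDerivAt (fun x => (P x - Real.cos (θ x))^2 + (Q x - Real.sin (θ x))^2) 0 x := by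
      intro x
      have hc : HasDerivAt (fun x => Real.cos (θ x)) (-Real.sin (θ x) * (f x)⁻¹) x := (hθ' x).cos
      have hs : HasDerivAt (fun x => Real.sin (θ x)) (Real.cos (θ x) * (f x)⁻¹) x := (hθ' x).sin
      have h1 := ((hP' x).fun_sub hc).fun_pow 2
      have h2 := ((hQ' x).fun_sub hs).fun_pow 2
      have h3 := h1.fun_add h2
      refine h3.congr_deriv (Eq.symm ?_)
      have hfx := hfne x
      field_simp
      ring
    have hRconst := is_const_of_deriv_eq_zero
      (fun x => (hR' x).differentiableAt) (fun x => (hR' x).deriv)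
    have hR0 : (P 0 - Real.cos (θ 0))^2 + (Q 0 - Real.sin (θ 0))^2 = 0 := by
      rw [hθ0, hcos₀, hsin₀]; ring
    intro x
    have hx := hRconst x 0
    rw [hR0] at hx
    constructor
    · have h2 : (P x - Real.cos (θ x)) * (P x - Real.cos (θ x)) = 0 := by
        nlinarith [sq_nonneg (P x - Real.cos (θ x)), sq_nonneg (Q x - Real.sin (θ x))]
      have := mul_self_eq_zero.mp h2
      linarith
    · have h2 : (Q x - Real.sin (θ x)) * (Q x - Real.sin (θ x)) = 0 := by
        nlinarith [sq_nonneg (P x - Real.cos (θ x)), sq_nonneg (Q x - Real.sin (θ x))]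
      have := mul_self_eq_zero.mp h2
      linarith
  have hPcos : ∀ x, P x = Real.cos (θ x) := fun x => (hPcosQsin x).1
  have hQsin : ∀ x, Q x = Real.sin (θ x) := fun x => (hPcosQsin x).2
  -- explicit profile
  set F : ℝ → ℝ := fun t => (Real.sqrt (e^2 * Real.cos t^2 + 4*μ) - e * Real.cos t)/2 with hF_def
  have hFcont : Continuous F := by
    apply Continuous.div_const
    apply Continuous.sub
    · exact Real.continuous_sqrt.comp
        ((continuous_const.mul (Real.continuous_cos.pow 2)).add continuous_const)
    · exact continuous_const.mul Real.continuous_cos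
  have hFpos : ∀ t, 0 < F t := by
    intro t
    have h1 : e * Real.cos t ≤ Real.sqrt (e^2 * Real.cos t^2) := by
      rw [show e^2 * Real.cos t^2 = (e * Real.cos t)^2 by ring, Real.sqrt_sq_eq_abs]
      exact le_abs_self _
    have h2 : Real.sqrt (e^2 * Real.cos t^2) < Real.sqrt (e^2 * Real.cos t^2 + 4*μ) := by
      apply Real.sqrt_lt_sqrt (by positivity); linarith
    simp only [hF_def]; linarith
  have hFper : Function.Periodic F (2*π) := by
    intro t; simp [hF_def, Real.cos_add_two_pi]
  have hfF : ∀ x, f x = F (θ x) := by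
    intro x
    have hb : μ - f x^2 = Real.cos (θ x) * (e * f x) := by
      have h := (hPcos x).symm
      rw [hP_def] at h
      exact (div_eq_iff (mul_ne_zero hepos.ne' (hfne x))).mp h.symm
    set b := e * Real.cos (θ x) with hb_def
    have hq : f x^2 + b * f x - μ = 0 := by rw [hb_def]; nlinarith [hb]
    have hpos2 : 0 < 2 * f x + b := by
      have h2fb : (2 * f x + b) * f x = f x^2 + μ := by nlinarith [hq]
      have hfx := hfpos x
      nlinarith [hq, hfx, hμ]
    have hsq2 : (2 * f x + b)^2 = b^2 + 4*μ := by nlinarith [hq]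
    have hval : 2 * f x + b = Real.sqrt (b^2 + 4*μ) := by
      rw [← hsq2, Real.sqrt_sq hpos2.le]
    have hbsq : b^2 = e^2 * Real.cos (θ x)^2 := by rw [hb_def]; ring
    simp only [hF_def]
    rw [← hbsq, ← hval, hb_def]
    ring
  -- Φ and its properties
  set Φ : ℝ → ℝ := fun y => ∫ t in (0:ℝ)..y, F t with hΦ_def
  have hΦ' : ∀ y, HasDerivAt Φ (F y) y := by
    intro y
    exact intervalIntegral.integral_hasDerivAt_right
      (hFcont.intervalIntegrable _ _)
      (hFcont.stronglyMeasurableAtFilter _ _)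
      hFcont.continuousAt
  have hΦmono : StrictMono Φ := by
    apply strictMono_of_deriv_pos
    intro y; rw [(hΦ' y).deriv]; exact hFpos y
  have hxΦ : ∀ x, Φ (θ x) = x + Φ θ₀ := by
    have hd : ∀ x, HasDerivAt (fun x => Φ (θ x) - x) 0 x := by
      intro x
      have h1 : HasDerivAt (fun x => Φ (θ x)) (F (θ x) * (f x)⁻¹) x :=
        (hΦ' (θ x)).comp x (hθ' x)
      have h2 : F (θ x) * (f x)⁻¹ = 1 := by
        rw [← hfF x, mul_inv_cancel₀ (hfne x)]
      rw [h2] at h1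
      simpa using h1.fun_sub (hasDerivAt_id x)
    have hconst := is_const_of_deriv_eq_zero
      (fun x => (hd x).differentiableAt) (fun x => (hd x).deriv)
    intro x
    have := hconst x 0
    simp only [hθ0] at this
    linarith [this]
  set I : ℝ := ∫ t in (0:ℝ)..(2*π), F t with hI_def
  have hshift : ∀ a : ℝ, Φ (a + 2*π) = Φ a + I := by
    intro a
    have h1 : ∫ t in a..(a + 2*π), F t = I := by
      rw [hI_def]
      have := hFper.intervalIntegral_add_eq a 0
      simpa using this
    have h2 : (∫ t in (0:ℝ)..a, F t) + ∫ t in a..(a + 2*π), F t = ∫ t in (0:ℝ)..(a + 2*π), F t :=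
      intervalIntegral.integral_add_adjacent_intervals
        (hFcont.intervalIntegrable _ _) (hFcont.intervalIntegrable _ _)
    simp only [hΦ_def]
    rw [← h2, h1]
  have hIbounds : 2 ≤ I ∧ I ≤ π := key_integral μ e hμ hepos h14
  -- surjectivity of θ
  have hθsurj : ∀ s : ℝ, ∃ x, θ x = s := by
    intro s
    refine ⟨Φ s - Φ θ₀, ?_⟩
    apply hΦmono.injective
    rw [hxΦ]; ring
  -- Δ₀ and its properties
  set Δ₀ : ℝ := θ T - θ 0 with hΔ_def
  have hΔconst : ∀ x, θ (x + T) - θ x = Δ₀ := by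
    have hd : ∀ x, HasDerivAt (fun x => θ (x + T) - θ x) 0 x := by
      intro x
      have h1 : HasDerivAt (fun x => θ (x + T)) (f (x + T))⁻¹ x := by
        have := (hθ' (x + T)).comp x ((hasDerivAt_id x).add_const T)
        simpa [Function.comp_def] using this
      have h2 : (f (x + T))⁻¹ = (f x)⁻¹ := by rw [hper x]
      rw [h2] at h1
      simpa using h1.fun_sub (hθ' x)
    have hconst := is_const_of_deriv_eq_zero
      (fun x => (hd x).differentiableAt) (fun x => (hd x).deriv)
    intro x
    have := hconst x 0
    simp only [zero_add] at this
    rw [this, hΔ_def]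
  have hΔpos : 0 < Δ₀ := by
    have : StrictMono θ := by
      apply strictMono_of_deriv_pos
      intro x; rw [(hθ' x).deriv]; exact inv_pos.mpr (hfpos x)
    simpa [hΔ_def] using this hT
  have hFΔ : ∀ t, F (t + Δ₀) = F t := by
    intro t
    obtain ⟨x, hx⟩ := hθsurj t
    have h1 : θ (x + T) = θ x + Δ₀ := by have := hΔconst x; linarith
    calc F (t + Δ₀) = F (θ (x + T)) := by rw [h1, hx]
      _ = f (x + T) := (hfF _).symm
      _ = f x := hper x
      _ = F t := by rw [hfF x, hx]
  have hΔ2π : 2*π ≤ Δ₀ := by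
    have h0 : F Δ₀ = F 0 := by simpa using hFΔ 0
    have hF0 : F 0 = (1 - e)/2 := by
      simp only [hF_def, Real.cos_zero]
      rw [show e^2 * 1^2 + 4*μ = 1 by nlinarith [h14], Real.sqrt_one]
      ring
    set c := Real.cos Δ₀ with hc_def
    have hs : Real.sqrt (e^2 * c^2 + 4*μ) = e * c + (1 - e) := by
      have := h0
      rw [hF0] at this
      simp only [hF_def, ← hc_def] at this
      linarith
    have h9 : Real.sqrt (e^2 * c^2 + 4*μ)^2 = e^2 * c^2 + 4*μ :=
      Real.sq_sqrt (by nlinarith [sq_nonneg (e*c), hμ])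
    have hsq3 : (e * c + (1 - e))^2 = e^2 * c^2 + 4*μ := by
      rw [← hs]; exact h9
    have hc1 : c = 1 := by
      have he1 : 0 < e * (1 - e) := mul_pos hepos (by linarith)
      nlinarith [hsq3, h14, he1]
    obtain ⟨n, hn⟩ := (Real.cos_eq_one_iff Δ₀).mp hc1
    have hn1 : 1 ≤ n := by
      by_contra hn1
      push_neg at hn1
      have : (n:ℝ) ≤ 0 := by exact_mod_cast Int.lt_add_one_iff.mp hn1
      nlinarith [pi_pos, hΔpos, hn]
    have : (1:ℝ) ≤ (n:ℝ) := by exact_mod_cast hn1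
    nlinarith [pi_pos, hn]
  -- conclude
  have hTΦ : T = Φ (θ 0 + Δ₀) - Φ (θ 0) := by
    have h1 := hxΦ T
    have h2 := hxΦ 0
    have h3 : θ T = θ 0 + Δ₀ := by rw [hΔ_def]; ring
    rw [← h3]; linarith
  have hlow : 2 ≤ T := by
    have h1 : Φ (θ 0 + 2*π) ≤ Φ (θ 0 + Δ₀) := hΦmono.monotone (by linarith)
    have h2 : Φ (θ 0 + 2*π) = Φ (θ 0) + I := hshift (θ 0)
    linarith [hIbounds.1]
  have hperI : Function.Periodic f I := by
    intro x
    have h1 : θ (x + I) = θ x + 2*π := by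
      apply hΦmono.injective
      rw [hxΦ, hshift]
      have := hxΦ x
      linarith
    rw [hfF (x + I), h1, hFper (θ x), ← hfF x]
  have hhigh : T ≤ π := le_trans (hminimal I (by linarith [hIbounds.1]) hperI) hIbounds.2
  exact ⟨hlow, hhigh⟩
end
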